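/- Let \bL be the 4d x 4d real matrix with 2d x 2d blocks [[-J/2, I], [-I/4, -J/2]], where J is the standard 2d x 2d symplectic matrix. Then the powers of \bL satisfy \bL^{2k} = (-1)^{k-1} \bL^2 and \bL^{2k+1} = (-1)^k \bL for every positive integer k. -/
import Mathlib


noncomputable section

/-- The standard symplectic matrix `J = [[0, I], [-I, 0]]` in dimension `2d`. -/
def sympJ (d : ℕ) : Matrix (Fin d ⊕ Fin d) (Fin d ⊕ Fin d) ℝ :=
  Matrix.fromBlocks 0 1 (-1) 0

/-- The Hamiltonian matrix `𝐋 = [[-J/2, I], [-I/4, -J/2]]` of the twisted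
Laplacian flow. -/
def twistedHamiltonian (d : ℕ) :
    Matrix ((Fin d ⊕ Fin d) ⊕ (Fin d ⊕ Fin d)) ((Fin d ⊕ Fin d) ⊕ (Fin d ⊕ Fin d)) ℝ :=
  Matrix.fromBlocks (-(1 / 2 : ℝ) • sympJ d) 1 (-(1 / 4 : ℝ) • 1)
    (-(1 / 2 : ℝ) • sympJ d)

lemma hJsq (d : ℕ) : sympJ d * sympJ d = -1 := by
  rw [← Matrix.fromBlocks_one, Matrix.fromBlocks_neg]
  simp [sympJ, Matrix.fromBlocks_multiply]

lemma key (d : ℕ) : twistedHamiltonian d ^ 3 = -(twistedHamiltonian d) := by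
  unfold twistedHamiltonian
  rw [pow_succ, pow_two, Matrix.fromBlocks_neg]
  simp only [Matrix.fromBlocks_multiply, Matrix.smul_mul, Matrix.mul_smul, Matrix.add_mul,
    Matrix.mul_add, Matrix.one_mul, Matrix.mul_one, Matrix.neg_mul, Matrix.mul_neg,
    smul_smul, hJsq, neg_smul, smul_neg, neg_neg, smul_add, Matrix.fromBlocks_add]
  rw [Matrix.fromBlocks_inj]
  refine ⟨?_, ?_, ?_, ?_⟩ <;> module

/-- Powers of the Hamiltonian matrix of the twisted Laplacian:
`𝐋^{2k} = (-1)^{k-1} 𝐋²` and `𝐋^{2k+1} = (-1)^k 𝐋` for every `k ≥ 1`. -/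
theorem twistedHamiltonian_pow (d : ℕ) (k : ℕ) (hk : 1 ≤ k) :
    twistedHamiltonian d ^ (2 * k) =
        ((-1 : ℝ) ^ (k - 1)) • twistedHamiltonian d ^ 2 ∧
      twistedHamiltonian d ^ (2 * k + 1) =
        ((-1 : ℝ) ^ k) • twistedHamiltonian d := by
  induction k, hk using Nat.le_induction with
  | base =>
    refine ⟨by simp, ?_⟩
    simpa using key d
  | succ k hk ih =>
    obtain ⟨h1, h2⟩ := ih
    have e1 : twistedHamiltonian d ^ (2 * (k + 1)) =
        twistedHamiltonian d ^ (2 * k + 1) * twistedHamiltonian d := by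
      rw [← pow_succ]; ring_nf
    have e2 : twistedHamiltonian d ^ (2 * (k + 1) + 1) =
        twistedHamiltonian d ^ (2 * k + 1) * twistedHamiltonian d ^ 2 := by
      rw [← pow_add]; ring_nf
    constructor
    · rw [e1, h2, Matrix.smul_mul, ← pow_two]
      simp [Nat.add_sub_cancel]
    · rw [e2, h2, Matrix.smul_mul, ← pow_succ', key d, pow_succ]
      simp [smul_smul, mul_comm]

end
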